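/- Let C be a finite tensor category over an algebraically closed field k and D a tensor category over k, and let F, G : C → D be right exact k-linear strong monoidal functors. Then the set Nat_⊗(F, G) of monoidal natural transformations F → G is finite. -/

import Mathlib

/-!
A monoidal natural transformation `g : F ⟶ G` behaves like a group-like element of a coalgebra:
with `Θ t = μ ≫ t_{P ⊗ P} ≫ δ` and `β s t = s_P ⊗ t_P`, monoidality gives `Θ g = β g g`, and the
unit axiom gives `g ≠ 0`. The classical proof that group-like elements are linearly independent
only needs `β` to send linearly independent families to linearly independent families. In `D` this
holds because for independent `uᵢ : 𝟙 ⟶ U` the map `⨁ᵢ 𝟙 ⟶ U` is mono (Schur's lemma for the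
simple unit), `B ⊗ -` preserves monos (it is a right adjoint), and duality turns any morphism
`C ⟶ E` into one out of `𝟙`. Finally, `P` generates `C` and `F` is right exact, so `t ↦ t_P` is
injective; hence `Nat(F, G)` is finite-dimensional and its independent subset of monoidal
transformations is finite.
-/

open CategoryTheory CategoryTheory.MonoidalCategory CategoryTheory.Limits

attribute [local instance] CategoryTheory.Abelian.hasFiniteBiproducts

section GroupLike

variable {k V W : Type*} [Field k] [AddCommGroup V] [Module k V] [AddCommGroup W] [Module k W]

open Submodule in
theorem linearIndepOn_setOf_map_eq_bilin_self (Θ : V →ₗ[k] W) (β : V →ₗ[k] V →ₗ[k] W)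
    (hβ : ∀ s : Finset V, LinearIndepOn k id (s : Set V) →
      LinearIndepOn k (fun p : V × V => β p.1 p.2) ((s : Set V) ×ˢ (s : Set V))) :
    LinearIndepOn k id {a | a ≠ 0 ∧ Θ a = β a a} := by
  classical
  rw [linearIndepOn_iff_linearIndepOn_finset]
  intro s hs
  induction s using Finset.induction_on with
  | empty => simp
  | insert a s has ih =>
  simp only [Finset.coe_insert, Set.insert_subset_iff] at hs
  obtain ⟨⟨ha0, ha⟩, hs⟩ := hs
  have hind := ih hs
  rw [Finset.coe_insert]
  refine hind.id_insert fun hspan => ?_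
  obtain ⟨c, -, hca⟩ := mem_span_finset.mp hspan
  -- the coefficients of `β x y` in `β a a` and in `Θ a` agree
  have key : ∑ p ∈ s ×ˢ s, (c p.1 * c p.2 - if p.1 = p.2 then c p.1 else 0) • β p.1 p.2 = 0 := by
    simp only [sub_smul, Finset.sum_sub_distrib, Finset.sum_product, ite_smul, zero_smul,
      Finset.sum_ite_eq, sub_eq_zero]
    calc ∑ x ∈ s, ∑ y ∈ s, (c x * c y) • β x y
        = ∑ x ∈ s, c x • β x (∑ y ∈ s, c y • y) := by
          simp only [map_sum, map_smul, Finset.smul_sum, mul_smul]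
      _ = β (∑ x ∈ s, c x • x) (∑ y ∈ s, c y • y) := by
          rw [map_sum β, LinearMap.sum_apply]; simp only [map_smul, LinearMap.smul_apply]
      _ = Θ (∑ x ∈ s, c x • x) := by rw [hca, ha]
      _ = ∑ x ∈ s, c x • Θ x := by simp only [map_sum, map_smul]
      _ = ∑ x ∈ s, if x ∈ s then c x • β x x else 0 :=
          Finset.sum_congr rfl fun x hx => by rw [if_pos hx, (hs hx).2]
  have hc : ∀ x ∈ s, ∀ y ∈ s, c x * c y = if x = y then c x else 0 := fun x hx y hy =>
    sub_eq_zero.mp <| linearIndepOn_finset_iff.mp (Finset.coe_product s s ▸ hβ s hind) _ key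
      (x, y) (Finset.mem_product.mpr ⟨hx, hy⟩)
  obtain ⟨x, hx, hcx⟩ : ∃ x ∈ s, c x ≠ 0 := by
    by_contra! h
    exact ha0 (hca ▸ Finset.sum_eq_zero fun x hx => by rw [h x hx, zero_smul])
  have hcx1 : c x = 1 := mul_left_cancel₀ hcx (by simpa using hc x hx x hx)
  have hcy : ∀ y ∈ s, y ≠ x → c y = 0 := fun y hy hyx =>
    (mul_eq_zero.mp (by simpa [Ne.symm hyx] using hc x hx y hy)).resolve_left hcx
  have hax : a = x := by
    rw [← hca, Finset.sum_eq_single x (fun y hy hyx => by rw [hcy y hy hyx, zero_smul])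
      (fun h => absurd hx h), hcx1, one_smul]
  exact has (hax ▸ hx)

end GroupLike

namespace CategoryTheory

section Schur

variable {k : Type*} [Field k] [IsAlgClosed k] {D : Type*} [Category D] [Abelian D] [Linear k D]
  {ι : Type*} [Fintype ι] {S U : D} [Simple S] [FiniteDimensional k (S ⟶ S)]

lemma eq_zero_of_comp_biproduct_desc_eq_zero {u : ι → (S ⟶ U)} (hu : LinearIndependent k u)
    {t : S ⟶ ⨁ fun _ : ι => S} (ht : t ≫ biproduct.desc u = 0) : t = 0 := by
  choose c hc using fun i => endomorphism_simple_eq_smul_id k (t ≫ biproduct.π _ i)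
  have hc0 : ∀ i, c i = 0 := Fintype.linearIndependent_iff.mp hu c <| by
    rw [← ht, ← Category.id_comp (biproduct.desc u), ← IsBilimit.total (biproduct.isBilimit _)]
    simp [Preadditive.sum_comp, Preadditive.comp_sum, ← reassoc_of% hc]
  ext i
  simp [← hc, hc0]

lemma mono_biproduct_desc_of_linearIndependent [∀ X : D, IsArtinianObject X]
    {u : ι → (S ⟶ U)} (hu : LinearIndependent k u) : Mono (biproduct.desc u) := by
  refine Abelian.mono_of_kernel_ι_eq_zero _ (by_contra fun hker => ?_)
  have hK : ¬IsZero (kernel (biproduct.desc u)) := fun hz => hker (hz.eq_zero_of_src _)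
  let φ := simpleSubobjectArrow hK ≫ kernel.ι _
  have hφ : φ ≠ 0 := fun h => id_nonzero (simpleSubobject hK) ((cancel_mono φ).mp (by simp [h]))
  obtain ⟨j, hj⟩ : ∃ j, φ ≫ biproduct.π _ j ≠ 0 := by
    by_contra! h
    exact hφ (biproduct.hom_ext _ _ fun j => by simp [h j])
  have := isIso_of_hom_simple hj
  have ht := eq_zero_of_comp_biproduct_desc_eq_zero hu
    (t := inv (φ ≫ biproduct.π _ j) ≫ φ) (by simp [φ])
  exact id_nonzero S (by simpa using congrArg (· ≫ biproduct.π _ j) ht)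

end Schur

section TensorIndependence

variable {k : Type*} [Field k] [IsAlgClosed k] {D : Type*} [Category D] [Abelian D] [Linear k D]
  [MonoidalCategory D] [MonoidalPreadditive D] [RightRigidCategory D]
  [Simple (𝟙_ D)] [∀ X Y : D, FiniteDimensional k (X ⟶ Y)] [∀ X : D, IsArtinianObject X]
  {ι : Type*} [Fintype ι]

lemma eq_zero_of_sum_tensorHom_unit_eq_zero {A B U : D} {u : ι → (𝟙_ D ⟶ U)}
    (hu : LinearIndependent k u) {c : ι → (A ⟶ B)} (h : ∑ i, c i ⊗ₘ u i = 0) (i : ι) :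
    c i = 0 := by
  classical
  have := mono_biproduct_desc_of_linearIndependent hu
  have : PreservesLimits (tensorLeft B) := (tensorLeftAdjunction B Bᘁ).rightAdjoint_preservesLimits
  have : Mono (B ◁ biproduct.desc u) := (tensorLeft B).map_mono (biproduct.desc u)
  let incl : ∀ j, B ⟶ B ⊗ ⨁ fun _ : ι => 𝟙_ D := fun j =>
    (ρ_ B).inv ≫ B ◁ biproduct.ι (fun _ : ι => 𝟙_ D) j
  have hsum : ∑ j, c j ≫ incl j = 0 := by
    rw [← cancel_mono (B ◁ biproduct.desc u), zero_comp, Preadditive.sum_comp,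
      ← cancel_epi (ρ_ A).hom, comp_zero, Preadditive.comp_sum, ← h]
    refine Finset.sum_congr rfl fun j _ => ?_
    simp only [incl, Category.assoc, ← whiskerLeft_comp, biproduct.ι_desc]
    rw [MonoidalCategory.tensorHom_def, whiskerRight_id, Category.assoc, Category.assoc]
  have hinclπ : ∀ j, incl j ≫ B ◁ biproduct.π (fun _ : ι => 𝟙_ D) i ≫ (ρ_ B).hom =
      if j = i then 𝟙 B else 0 := by
    intro j
    split_ifs with hji
    · subst hji
      simp [incl, ← whiskerLeft_comp_assoc]
    · simp [incl, ← whiskerLeft_comp_assoc, biproduct.ι_π_ne _ hji]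
  simpa [Preadditive.sum_comp, hinclπ, comp_ite] using
    congrArg (· ≫ B ◁ biproduct.π (fun _ : ι => 𝟙_ D) i ≫ (ρ_ B).hom) hsum

lemma eq_zero_of_sum_tensorHom_eq_zero [MonoidalLinear k D] {A B C E : D} {b : ι → (C ⟶ E)}
    (hb : LinearIndependent k b) {c : ι → (A ⟶ B)} (h : ∑ i, c i ⊗ₘ b i = 0) (i : ι) :
    c i = 0 := by
  let mate : (C ⟶ E) →ₗ[k] (𝟙_ D ⟶ E ⊗ Cᘁ) :=
    { toFun := fun f => η_ C Cᘁ ≫ f ▷ Cᘁ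
      map_add' := by simp
      map_smul' := by simp }
  have hmate : Function.Injective mate := fun f g hfg => by
    simpa [mate] using congrArg (tensorRightHomEquiv _ C Cᘁ E).symm hfg
  have htensor : ∀ j, c j ⊗ₘ mate (b j) =
      A ◁ η_ C Cᘁ ≫ (α_ A C Cᘁ).inv ≫ (c j ⊗ₘ b j) ▷ Cᘁ ≫ (α_ B E Cᘁ).hom := by
    intro j
    simp [mate, MonoidalCategory.tensorHom_def']
  refine eq_zero_of_sum_tensorHom_unit_eq_zero (hb.map' mate (LinearMap.ker_eq_bot.mpr hmate)) ?_ i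
  simp only [Function.comp_apply, htensor, ← Preadditive.comp_sum, ← Preadditive.sum_comp,
    ← sum_whiskerRight, h]
  simp

variable [MonoidalLinear k D] {A B C E : D}

lemma LinearIndependent.tensorHom {κ : Type*} [Fintype κ] {a : ι → (A ⟶ B)} {b : κ → (C ⟶ E)}
    (ha : LinearIndependent k a) (hb : LinearIndependent k b) :
    LinearIndependent k (fun p : ι × κ => a p.1 ⊗ₘ b p.2) := by
  refine Fintype.linearIndependent_iff.mpr fun f hf ⟨i, j⟩ => ?_
  have hrows : ∑ j, (∑ i, f (i, j) • a i) ⊗ₘ b j = 0 := by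
    rw [← hf, Fintype.sum_prod_type, Finset.sum_comm]
    simp [MonoidalCategory.tensorHom_def, sum_whiskerRight, Preadditive.sum_comp]
  exact Fintype.linearIndependent_iff.mp ha _ (eq_zero_of_sum_tensorHom_eq_zero hb hrows j) i

lemma LinearIndepOn.tensorHom {κ₁ κ₂ : Type*} {a : κ₁ → (A ⟶ B)} {b : κ₂ → (C ⟶ E)}
    {s : Finset κ₁} {t : Finset κ₂} (ha : LinearIndepOn k a (s : Set κ₁))
    (hb : LinearIndepOn k b (t : Set κ₂)) :
    LinearIndepOn k (fun p : κ₁ × κ₂ => a p.1 ⊗ₘ b p.2) ((s : Set κ₁) ×ˢ (t : Set κ₂)) :=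
  (LinearIndependent.tensorHom ha hb).comp _ (Equiv.Set.prod _ _).injective

end TensorIndependence

namespace NatTrans

section Generator

variable {C D : Type*} [Category C] [Preadditive C] [HasFiniteBiproducts C] [Category D]
  [Preadditive D] {F G : C ⥤ D} [F.Additive] [F.PreservesEpimorphisms]

lemma eq_zero_of_app_eq_zero_of_epi_from_biproduct {P : C}
    (hP : ∀ X : C, ∃ (n : ℕ) (q : (⨁ fun _ : Fin n => P) ⟶ X), Epi q) {t : F ⟶ G}
    (ht : t.app P = 0) : t = 0 := by
  ext X
  obtain ⟨n, q, hq⟩ := hP X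
  have hsum : t.app (⨁ fun _ : Fin n => P) = 0 := by
    rw [← cancel_epi (F.mapBiproduct fun _ : Fin n => P).inv, Functor.mapBiproduct_inv, comp_zero]
    ext j
    simp [ht]
  rw [app_zero, ← cancel_epi (F.map q), naturality, hsum, zero_comp, comp_zero]

end Generator

section Monoidal

open Functor.LaxMonoidal Functor.OplaxMonoidal

variable {C D : Type*} [Category C] [MonoidalCategory C] [Category D] [Preadditive D]
  [MonoidalCategory D]

lemma IsMonoidal.ne_zero {F G : C ⥤ D} [F.LaxMonoidal] [G.Monoidal] [Simple (𝟙_ D)]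
    {g : F ⟶ G} (hg : g.IsMonoidal) : g ≠ 0 := by
  rintro rfl
  apply id_nonzero (𝟙_ D)
  rw [← Functor.Monoidal.ε_η (F := G), ← hg.unit, app_zero, comp_zero, zero_comp]

variable (k : Type*) [Field k] [Linear k D] [MonoidalPreadditive D] [MonoidalLinear k D]
  (F G : C ⥤ D)

def tensorAppBilin (X Y : C) :
    (F ⟶ G) →ₗ[k] (F ⟶ G) →ₗ[k] (F.obj X ⊗ F.obj Y ⟶ G.obj X ⊗ G.obj Y) :=
  LinearMap.mk₂ k (fun s t => s.app X ⊗ₘ t.app Y) (by simp [MonoidalPreadditive.add_tensor])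
    (by simp [MonoidalCategory.tensorHom_def]) (by simp [MonoidalPreadditive.tensor_add])
    (by simp [MonoidalCategory.tensorHom_def])

def conjAppTensor [F.LaxMonoidal] [G.OplaxMonoidal] (X Y : C) :
    (F ⟶ G) →ₗ[k] (F.obj X ⊗ F.obj Y ⟶ G.obj X ⊗ G.obj Y) where
  toFun t := μ F X Y ≫ t.app (X ⊗ Y) ≫ δ G X Y
  map_add' := by simp
  map_smul' := by simp

variable {k F G}

lemma IsMonoidal.conjAppTensor_eq [F.LaxMonoidal] [G.Monoidal] {g : F ⟶ G} (hg : g.IsMonoidal)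
    (X Y : C) : conjAppTensor k F G X Y g = tensorAppBilin k F G X Y g g := by
  simp [conjAppTensor, tensorAppBilin, reassoc_of% hg.tensor X Y]

end Monoidal

end NatTrans

end CategoryTheory

/-- Let `C` be a finite tensor category over an algebraically closed
field `k` (a tensor category with a projective generator), `D` a tensor category over
`k`, and `F, G : C ⥤ D` right exact `k`-linear strong monoidal functors. Then the set
of monoidal natural transformations `F ⟶ G` is finite. -/
theorem monoidalNatTrans_finite
    (k : Type*) [Field k] [IsAlgClosed k]
    -- C is a finite tensor category over k:
    {C : Type*} [Category C] [Abelian C] [Linear k C]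
    [MonoidalCategory C] [MonoidalPreadditive C] [MonoidalLinear k C]
    [RigidCategory C] [Simple (𝟙_ C)]
    [∀ X : C, IsNoetherianObject X] [∀ X : C, IsArtinianObject X]
    [∀ X Y : C, FiniteDimensional k (X ⟶ Y)]
    (P : C) [Projective P]
    (hP : ∀ X : C, ∃ (n : ℕ) (q : (⨁ fun _ : Fin n => P) ⟶ X), Epi q)
    -- D is a tensor category over k:
    {D : Type*} [Category D] [Abelian D] [Linear k D]
    [MonoidalCategory D] [MonoidalPreadditive D] [MonoidalLinear k D]
    [RigidCategory D] [Simple (𝟙_ D)]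
    [∀ X : D, IsNoetherianObject X] [∀ X : D, IsArtinianObject X]
    [∀ X Y : D, FiniteDimensional k (X ⟶ Y)]
    -- F and G are right exact k-linear strong monoidal functors:
    (F G : C ⥤ D) [F.Monoidal] [G.Monoidal]
    [F.Additive] [F.Linear k] [PreservesFiniteColimits F]
    [G.Additive] [G.Linear k] [PreservesFiniteColimits G] :
    Finite {g : F ⟶ G // NatTrans.IsMonoidal g} := by
  have happ_injective :
      Function.Injective (NatTrans.appLinearMap (R := k) (F := F) (G := G) P) :=
    (injective_iff_map_eq_zero _).mpr fun _ ht =>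
      NatTrans.eq_zero_of_app_eq_zero_of_epi_from_biproduct hP ht
  have : FiniteDimensional k (F ⟶ G) := .of_injective _ happ_injective
  have hindep : LinearIndepOn k id {g : F ⟶ G | g ≠ 0 ∧
      NatTrans.conjAppTensor k F G P P g = NatTrans.tensorAppBilin k F G P P g g} :=
    linearIndepOn_setOf_map_eq_bilin_self _ _ fun _ hs =>
      (hs.map_injOn _ happ_injective.injOn).tensorHom (hs.map_injOn _ happ_injective.injOn)
  exact (hindep.mono fun g hg => ⟨hg.ne_zero, hg.conjAppTensor_eq P P⟩).finite
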